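/- Let m and d be positive integers. Suppose a_1 ≤ a_2 ≤ ... ≤ a_t and b_1, b_2, ..., b_s are sequences of nonnegative integers such that b_1 ≤ b_2 = b_3 = ... = b_s = C(m - 1 + d, d) and b_s ≥ a_i for all i ≤ t. If a_1 + ... + a_t ≤ b_1 + ... + b_s, then a_1^{⟨d⟩} + ... + a_t^{⟨d⟩} ≤ b_1^{⟨d⟩} + ... + b_s^{⟨d⟩}. -/

import Mathlib

/-- Macaulay's function `a^{⟨d⟩}`: writing `a` in its Macaulay `d`-binomial representation
`a = C(k_d, d) + C(k_{d-1}, d-1) + ⋯ + C(k_j, j)` (computed greedily: `k_d` is the largest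
integer with `C(k_d, d) ≤ a`), we set `a^{⟨d⟩} = C(k_d+1, d+1) + ⋯ + C(k_j+1, j+1)`,
and `0^{⟨d⟩} = 0`. -/
def macaulay : ℕ → ℕ → ℕ
  | _, 0 => 0
  | 0, _ => 0
  | d + 1, a + 1 =>
    let k := Nat.findGreatest (fun k => Nat.choose k (d + 1) ≤ a + 1) (a + d + 2)
    Nat.choose (k + 1) (d + 2) + macaulay d (a + 1 - Nat.choose k (d + 1))

/-!
Both sides are compared through two inequalities for `a ↦ a^{⟨l⟩}`, proved jointly by induction
on `l` from the recursion `(C(k, l+1) + r)^{⟨l+1⟩} = C(k+1, l+2) + r^{⟨l⟩}` (for `r < C(k, l)`):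
superadditivity, and the exchange inequality `x^{⟨l⟩} + y^{⟨l⟩} ≤ z^{⟨l⟩} + N^{⟨l⟩}` for
`x, y ≤ N = C(n, l)` and `z + N = x + y`. With them the `a_i` can be merged, one at a time and
without decreasing the sum of Macaulay values, into `q` copies of `N = C(m-1+d, d)` and a remainder
`r ≤ N`. The `b_j` already have this shape, and since `a ↦ a^{⟨d⟩}` is monotone, comparing
`q N + r ≤ (s - 1) N + b_1` with the corresponding sums of Macaulay values is elementary.
-/

theorem macaulay_zero_right (d : ℕ) : macaulay d 0 = 0 := by
  cases d <;> rfl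

theorem macaulay_zero_left (a : ℕ) : macaulay 0 a = 0 := by
  cases a <;> rfl

theorem Nat.le_choose_succ_add (k d : ℕ) : k ≤ k.choose (d + 1) + d := by
  induction k with
  | zero => omega
  | succ k ih =>
    rcases le_or_gt d k with h | h
    · have := Nat.choose_pos h
      rw [Nat.choose_succ_succ']
      omega
    · omega

theorem macaulay_succ_choose_add {d k r : ℕ} (hk : d ≤ k) (hr : r < k.choose d) :
    macaulay (d + 1) (k.choose (d + 1) + r) = (k + 1).choose (d + 2) + macaulay d r := by
  obtain rfl | hk := hk.eq_or_lt
  · obtain rfl : r = 0 := by simpa using hr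
    simp [macaulay_zero_right]
  obtain ⟨a, ha⟩ : ∃ a, k.choose (d + 1) + r = a + 1 :=
    Nat.exists_eq_add_one.2 (by have := Nat.choose_pos (show d + 1 ≤ k from hk); omega)
  have hgreatest : Nat.findGreatest (fun j => j.choose (d + 1) ≤ a + 1) (a + d + 2) = k := by
    refine Nat.findGreatest_eq_iff.2
      ⟨by have := k.le_choose_succ_add d; omega, fun _ => by omega, fun j hkj _ hj => ?_⟩
    have := Nat.choose_le_choose (d + 1) hkj
    rw [Nat.choose_succ_succ'] at this
    omega
  rw [ha, macaulay, hgreatest]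
  congr 2
  omega

theorem exists_eq_choose_add (d : ℕ) {v : ℕ} (hv : 1 ≤ v) :
    ∃ k r, d + 1 ≤ k ∧ r < k.choose d ∧ v = k.choose (d + 1) + r := by
  induction v, hv using Nat.le_induction with
  | base => exact ⟨d + 1, 0, le_rfl, Nat.choose_pos (by omega), by simp⟩
  | succ v _ ih =>
    obtain ⟨k, r, hk, hr, rfl⟩ := ih
    by_cases h : r + 1 < k.choose d
    · exact ⟨k, r + 1, hk, h, by omega⟩
    · refine ⟨k + 1, 0, by omega, Nat.choose_pos (by omega), ?_⟩
      rw [Nat.choose_succ_succ']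
      omega

theorem exists_eq_choose_add_of_lt {d n v : ℕ} (hv : 1 ≤ v) (hvn : v < (n + 1).choose (d + 1)) :
    ∃ k r, d + 1 ≤ k ∧ k ≤ n ∧ r < k.choose d ∧ v = k.choose (d + 1) + r := by
  obtain ⟨k, r, hk, hr, rfl⟩ := exists_eq_choose_add d hv
  refine ⟨k, r, hk, ?_, hr, rfl⟩
  by_contra h
  have := Nat.choose_le_choose (d + 1) (show n + 1 ≤ k by omega)
  omega

theorem macaulay_choose {d k : ℕ} (hd : 0 < d) (hk : d ≤ k) :
    macaulay d (k.choose d) = (k + 1).choose (d + 1) := by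
  obtain ⟨d, rfl⟩ := Nat.exists_eq_add_one.2 hd
  simpa [macaulay_zero_right] using
    macaulay_succ_choose_add (d := d) (r := 0) (by omega) (Nat.choose_pos (by omega))

theorem macaulay_one (v : ℕ) : macaulay 1 v = (v + 1).choose 2 := by
  simpa [macaulay_zero_right] using
    macaulay_succ_choose_add (d := 0) (k := v) (r := 0) v.zero_le (by simp)

def MacaulaySuperadditive (l : ℕ) : Prop :=
  ∀ x y, macaulay l x + macaulay l y ≤ macaulay l (x + y)

-- A substitute for convexity, which `macaulay l` lacks: for `l = 2` its increments are
-- `1, 1, 2, 1, 2, 3, 1, …`.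
def MacaulayExchangeAt (l n : ℕ) : Prop :=
  ∀ x y z : ℕ, x ≤ n.choose l → y ≤ n.choose l → z + n.choose l = x + y →
    macaulay l x + macaulay l y ≤ macaulay l z + macaulay l (n.choose l)

def MacaulayExchange (l : ℕ) : Prop :=
  ∀ n, MacaulayExchangeAt l n

theorem macaulaySuperadditive_one : MacaulaySuperadditive 1 := by
  intro x y
  simp only [macaulay_one]
  qify
  simp only [Nat.cast_choose_two]
  push_cast
  nlinarith [mul_nonneg (Nat.cast_nonneg (α := ℚ) x) (Nat.cast_nonneg (α := ℚ) y)]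

theorem macaulayExchange_one : MacaulayExchange 1 := by
  intro n x y z hx hy hz
  rw [Nat.choose_one_right] at hx hy hz ⊢
  simp only [macaulay_one]
  qify at hx hy hz ⊢
  simp only [Nat.cast_choose_two]
  push_cast
  nlinarith [mul_nonneg (sub_nonneg.2 hx) (sub_nonneg.2 hy)]

theorem macaulay_succ_increment_le {l n z : ℕ} (hl : 0 < l) (hA : MacaulaySuperadditive l)
    (hB : MacaulayExchange l) {c s : ℕ} (hsc : s + c = n.choose l)
    (hle : z + c ≤ n.choose (l + 1) + s) :
    macaulay (l + 1) (z + c) + macaulay l s ≤ macaulay (l + 1) z + macaulay l (n.choose l) := by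
  induction c using Nat.strong_induction_on generalizing s with
  | _ c ih =>
  obtain rfl | hc := Nat.eq_zero_or_pos c
  · simp [← hsc]
  obtain ⟨k, r, hk, hkn, hr, hx⟩ :=
    exists_eq_choose_add_of_lt (d := l) (n := n) (show 1 ≤ z + c by omega)
      (by rw [Nat.choose_succ_succ']; omega)
  have hkN := Nat.choose_le_choose l hkn
  -- Write `z + c = C(k, l+1) + r`. If `c ≤ r`, then `z` has the same leading term; if
  -- `c ≤ r + C(k-1, l)`, its leading term is `C(k-1, l+1)`; otherwise strip `C(k-1, l) + r`
  -- from `z + c` and recurse.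
  rw [hx, macaulay_succ_choose_add (by omega) hr]
  rcases le_or_gt c r with hcr | hrc
  · rw [show z = k.choose (l + 1) + (r - c) by omega,
      macaulay_succ_choose_add (by omega) (by omega)]
    have := hB n r s (r - c) (by omega) (by omega) (by omega)
    omega
  obtain ⟨k, rfl⟩ := Nat.exists_eq_add_one.2 (show 0 < k by omega)
  rw [Nat.choose_succ_succ'] at hx
  have hpascal : (k + 2).choose (l + 2) = (k + 1).choose (l + 1) + (k + 1).choose (l + 2) :=
    Nat.choose_succ_succ' _ _
  rw [hpascal, ← macaulay_choose hl (show l ≤ k by omega)]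
  have hrs := hA r s
  rcases le_or_gt (c - r) (k.choose l) with he | he
  · rw [show z = k.choose (l + 1) + (k.choose l - (c - r)) by omega,
      macaulay_succ_choose_add (by omega) (by omega)]
    have := hB n (k.choose l) (r + s) (k.choose l - (c - r)) (Nat.choose_le_choose l (by omega))
      (by omega) (by omega)
    omega
  · have hkl : l + 1 ≤ k := by
      by_contra h
      rw [Nat.choose_eq_zero_of_lt (show k < l + 1 by omega)] at hx
      omega
    have := Nat.choose_pos (show l ≤ k by omega)
    have := Nat.choose_le_choose (l + 1) (show k ≤ n by omega)
    have hrec := ih (c - r - k.choose l) (by omega) (s := k.choose l + (r + s)) (by omega)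
      (by omega)
    have hpure : macaulay (l + 1) (k.choose (l + 1)) = (k + 1).choose (l + 2) :=
      macaulay_choose (by omega) hkl
    rw [show z + (c - r - k.choose l) = k.choose (l + 1) by omega, hpure] at hrec
    have := hA (k.choose l) (r + s)
    omega

theorem macaulayExchangeAt_succ_of_le {l n x y z : ℕ} (hl : 0 < l)
    (hA : MacaulaySuperadditive l) (hB : MacaulayExchange l) (ih : MacaulayExchangeAt (l + 1) n)
    (hxy : x ≤ y) (hy : y ≤ (n + 1).choose (l + 1)) (hz : z + (n + 1).choose (l + 1) = x + y) :
    macaulay (l + 1) x + macaulay (l + 1) y ≤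
      macaulay (l + 1) z + macaulay (l + 1) ((n + 1).choose (l + 1)) := by
  obtain rfl | hyN := hy.eq_or_lt
  · obtain rfl : z = x := by omega
    exact le_rfl
  have hln : l ≤ n := by
    by_contra h
    rw [Nat.choose_eq_zero_of_lt (show n + 1 < l + 1 by omega)] at hyN
    omega
  have hpure : macaulay (l + 1) ((n + 1).choose (l + 1)) =
      macaulay l (n.choose l) + (n + 1).choose (l + 2) := by
    rw [macaulay_choose (by omega) (show l + 1 ≤ n + 1 by omega), macaulay_choose hl hln]
    exact Nat.choose_succ_succ' _ _
  rw [hpure]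
  rw [Nat.choose_succ_succ'] at hyN hz
  rcases le_or_gt (n.choose (l + 1)) y with hy' | hy'
  · obtain ⟨s, rfl⟩ := Nat.exists_eq_add_of_le hy'
    rw [macaulay_succ_choose_add hln (by omega)]
    have := macaulay_succ_increment_le hl hA hB (n := n) (z := z) (c := n.choose l - s) (s := s)
      (by omega) (by omega)
    rw [show z + (n.choose l - s) = x by omega] at this
    omega
  · have hl1n : l + 1 ≤ n := by
      by_contra h
      rw [Nat.choose_eq_zero_of_lt (show n < l + 1 by omega)] at hy'
      omega
    have h1 := ih x y (z + n.choose l) (by omega) (by omega) (by omega)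
    have h2 := macaulay_succ_increment_le hl hA hB (n := n) (z := z) (c := n.choose l) (s := 0)
      (by omega) (by omega)
    have hpure' : macaulay (l + 1) (n.choose (l + 1)) = (n + 1).choose (l + 2) :=
      macaulay_choose (by omega) hl1n
    rw [hpure'] at h1
    rw [macaulay_zero_right] at h2
    omega

theorem macaulayExchange_succ {l : ℕ} (hl : 0 < l) (hA : MacaulaySuperadditive l)
    (hB : MacaulayExchange l) : MacaulayExchange (l + 1) := by
  intro n
  induction n with
  | zero =>
    intro x y z hx hy hz
    simp only [Nat.choose_zero_succ] at hx hy hz ⊢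
    obtain ⟨rfl, rfl, rfl⟩ : x = 0 ∧ y = 0 ∧ z = 0 := by omega
    rfl
  | succ n ih =>
    intro x y z hx hy hz
    rcases le_total x y with hxy | hyx
    · exact macaulayExchangeAt_succ_of_le hl hA hB ih hxy hy hz
    · simpa only [add_comm] using macaulayExchangeAt_succ_of_le hl hA hB ih hyx hx (by omega)

theorem choose_succ_le_macaulay_choose {l k : ℕ} (hl : 0 < l) (hA : MacaulaySuperadditive l)
    (hk : l + 1 ≤ k) : (k + 1).choose (l + 2) ≤ macaulay l (k.choose (l + 1)) := by
  induction k, hk using Nat.le_induction with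
  | base => simpa using (macaulay_choose hl le_rfl).ge
  | succ k hk ih =>
    calc (k + 2).choose (l + 2) = macaulay l (k.choose l) + (k + 1).choose (l + 2) := by
          rw [macaulay_choose hl (by omega)]; exact Nat.choose_succ_succ' _ _
      _ ≤ macaulay l (k.choose l) + macaulay l (k.choose (l + 1)) := by gcongr
      _ ≤ macaulay l (k.choose l + k.choose (l + 1)) := hA _ _
      _ = macaulay l ((k + 1).choose (l + 1)) := by rw [Nat.choose_succ_succ']

theorem macaulay_succ_le {l : ℕ} (hl : 0 < l) (hA : MacaulaySuperadditive l) (x : ℕ) :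
    macaulay (l + 1) x ≤ macaulay l x := by
  obtain rfl | hx := Nat.eq_zero_or_pos x
  · simp [macaulay_zero_right]
  obtain ⟨k, r, hk, hr, rfl⟩ := exists_eq_choose_add l hx
  rw [macaulay_succ_choose_add (by omega) hr]
  have := choose_succ_le_macaulay_choose hl hA hk
  have := hA (k.choose (l + 1)) r
  omega

theorem macaulaySuperadditive_succ {l : ℕ} (hl : 0 < l) (hA : MacaulaySuperadditive l)
    (hB : MacaulayExchange (l + 1)) : MacaulaySuperadditive (l + 1) := by
  suffices h : ∀ x y, x ≤ y →
      macaulay (l + 1) x + macaulay (l + 1) y ≤ macaulay (l + 1) (x + y) by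
    intro x y
    rcases le_total x y with hxy | hyx
    · exact h x y hxy
    · simpa only [add_comm] using h y x hyx
  intro x
  induction x using Nat.strong_induction_on with
  | _ x ih =>
  intro y hxy
  obtain rfl | hx := Nat.eq_zero_or_pos x
  · simp [macaulay_zero_right]
  obtain ⟨k, r, hk, hr, rfl⟩ := exists_eq_choose_add l (show 1 ≤ y by omega)
  rcases lt_or_ge (x + r) (k.choose l) with hxr | hxr
  · rw [macaulay_succ_choose_add (by omega) hr,
      show x + (k.choose (l + 1) + r) = k.choose (l + 1) + (x + r) by ring,
      macaulay_succ_choose_add (by omega) hxr]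
    have := macaulay_succ_le hl hA x
    have := hA x r
    omega
  · have hN : (k + 1).choose (l + 1) = k.choose l + k.choose (l + 1) := Nat.choose_succ_succ' _ _
    have h1 := hB (k + 1) x (k.choose (l + 1) + r) (x + r - k.choose l) (by omega) (by omega)
      (by omega)
    have h2 := ih (x + r - k.choose l) (by omega) ((k + 1).choose (l + 1)) (by omega)
    rw [show x + r - k.choose l + (k + 1).choose (l + 1) = x + (k.choose (l + 1) + r) by omega]
      at h2
    omega

theorem macaulaySuperadditive_and_exchange (l : ℕ) :
    MacaulaySuperadditive l ∧ MacaulayExchange l := by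
  induction l with
  | zero =>
    exact ⟨fun _ _ => by simp [macaulay_zero_left],
      fun _ _ _ _ _ _ _ => by simp [macaulay_zero_left]⟩
  | succ l ih =>
    obtain rfl | hl := Nat.eq_zero_or_pos l
    · exact ⟨macaulaySuperadditive_one, macaulayExchange_one⟩
    have hB := macaulayExchange_succ hl ih.1 ih.2
    exact ⟨macaulaySuperadditive_succ hl ih.1 hB, hB⟩

theorem macaulay_add_le (l x y : ℕ) : macaulay l x + macaulay l y ≤ macaulay l (x + y) :=
  (macaulaySuperadditive_and_exchange l).1 x y

theorem macaulay_add_le_add_macaulay_choose {l n x y z : ℕ} (hx : x ≤ n.choose l)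
    (hy : y ≤ n.choose l) (hz : z + n.choose l = x + y) :
    macaulay l x + macaulay l y ≤ macaulay l z + macaulay l (n.choose l) :=
  (macaulaySuperadditive_and_exchange l).2 n x y z hx hy hz

theorem macaulay_monotone (l : ℕ) : Monotone (macaulay l) := fun x y hxy => by
  simpa [Nat.add_sub_cancel' hxy] using (macaulay_add_le l x (y - x)).trans' le_self_add

theorem exists_sum_macaulay_le {ι : Type*} (l n : ℕ) (s : Finset ι) (a : ι → ℕ)
    (ha : ∀ i ∈ s, a i ≤ n.choose l) :
    ∃ q r, r ≤ n.choose l ∧ q * n.choose l + r = ∑ i ∈ s, a i ∧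
      ∑ i ∈ s, macaulay l (a i) ≤ q * macaulay l (n.choose l) + macaulay l r := by
  induction s using Finset.cons_induction with
  | empty => exact ⟨0, 0, by simp [macaulay_zero_right]⟩
  | cons j s hj ih =>
    obtain ⟨q, r, hr, hsum, hmac⟩ := ih fun i hi => ha i (Finset.mem_cons_of_mem hi)
    have hj := ha j (Finset.mem_cons_self j s)
    simp only [Finset.sum_cons]
    rcases le_or_gt (a j + r) (n.choose l) with h | h
    · refine ⟨q, a j + r, h, by omega, ?_⟩
      have := macaulay_add_le l (a j) r
      omega
    · obtain ⟨z, hz⟩ := Nat.exists_eq_add_of_le h.le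
      have := macaulay_add_le_add_macaulay_choose (z := z) hj hr (by omega)
      refine ⟨q + 1, z, by omega, by rw [add_mul]; omega, ?_⟩
      rw [add_mul]
      omega

theorem mul_add_le_mul_add_of_monotone {f : ℕ → ℕ} (hf : Monotone f) (hf0 : f 0 = 0)
    {N p q r b : ℕ} (hr : r ≤ N) (hb : b ≤ N) (h : q * N + r ≤ p * N + b) :
    q * f N + f r ≤ p * f N + f b := by
  rcases lt_trichotomy q p with hqp | rfl | hpq
  · calc q * f N + f r ≤ (q + 1) * f N := by rw [add_one_mul]; gcongr; exact hf hr
      _ ≤ p * f N + f b := le_add_right (Nat.mul_le_mul_right _ hqp)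
  · exact Nat.add_le_add_left (hf (by omega)) _
  · have hpN : (p + 1) * N ≤ q * N := Nat.mul_le_mul_right _ hpq
    rw [add_one_mul] at hpN
    obtain rfl : r = 0 := by omega
    obtain rfl : b = N := by omega
    obtain rfl | hN := Nat.eq_zero_or_pos b
    · simp [hf0]
    obtain rfl : q = p + 1 :=
      le_antisymm (Nat.le_of_mul_le_mul_right (by rw [add_one_mul]; omega) hN) hpq
    simp [hf0, add_one_mul]

theorem macaulay_sum_le_of_seq_general (m d t s : ℕ) (hs : 0 < s) (a : Fin t → ℕ) (b : Fin s → ℕ)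
    (hb0 : b ⟨0, hs⟩ ≤ Nat.choose (m - 1 + d) d)
    (hbconst : ∀ i : Fin s, 0 < (i : ℕ) → b i = Nat.choose (m - 1 + d) d)
    (hab : ∀ i : Fin t, a i ≤ b ⟨s - 1, Nat.sub_lt hs one_pos⟩)
    (hsum : ∑ i, a i ≤ ∑ i, b i) :
    ∑ i, macaulay d (a i) ≤ ∑ i, macaulay d (b i) := by
  obtain ⟨s, rfl⟩ := Nat.exists_eq_add_one.2 hs
  have hb : ∀ i, b i ≤ (m - 1 + d).choose d :=
    Fin.cases hb0 fun i => (hbconst i.succ i.succ_pos).le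
  have hsplit (f : ℕ → ℕ) : ∑ i, f (b i) = s * f ((m - 1 + d).choose d) + f (b 0) := by
    simp [Fin.sum_univ_succ, hbconst _ (Fin.succ_pos _), add_comm]
  obtain ⟨q, r, hr, hqr, hmac⟩ :=
    exists_sum_macaulay_le d (m - 1 + d) Finset.univ a fun i _ => (hab i).trans (hb _)
  rw [hsplit]
  refine hmac.trans (mul_add_le_mul_add_of_monotone (macaulay_monotone d) (macaulay_zero_right d)
    hr (hb 0) ?_)
  have hbsum : ∑ i, b i = s * (m - 1 + d).choose d + b 0 := hsplit id
  omega

/-- Let `m` and `d` be positive integers. Suppose `a 0 ≤ a 1 ≤ ⋯ ≤ a (t-1)` and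
`b 0, …, b (s-1)` are sequences of nonnegative integers such that
`b 0 ≤ b 1 = ⋯ = b (s-1) = C(m - 1 + d, d)` and `b (s-1) ≥ a i` for all `i`.
If `a 0 + ⋯ + a (t-1) ≤ b 0 + ⋯ + b (s-1)`, then
`(a 0)^{⟨d⟩} + ⋯ + (a (t-1))^{⟨d⟩} ≤ (b 0)^{⟨d⟩} + ⋯ + (b (s-1))^{⟨d⟩}`. -/
theorem macaulay_sum_le_of_seq (m d t s : ℕ) (hm : 0 < m) (hd : 0 < d)
    (ht : 0 < t) (hs : 0 < s) (a : Fin t → ℕ) (b : Fin s → ℕ)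
    (hamono : Monotone a)
    (hb0 : b ⟨0, hs⟩ ≤ Nat.choose (m - 1 + d) d)
    (hbconst : ∀ i : Fin s, 0 < (i : ℕ) → b i = Nat.choose (m - 1 + d) d)
    (hab : ∀ i : Fin t, a i ≤ b ⟨s - 1, Nat.sub_lt hs one_pos⟩)
    (hsum : ∑ i, a i ≤ ∑ i, b i) :
    ∑ i, macaulay d (a i) ≤ ∑ i, macaulay d (b i) :=
  macaulay_sum_le_of_seq_general m d t s hs a b hb0 hbconst hab hsum
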